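/- Characterization of 2-input 2-output nonsignalling boxes with common certainty of disagreement: a nonsignalling box P with inputs x,y ∈ {0,1} and outputs a,b ∈ {0,1} exhibits common certainty of disagreement if and only if there exist reals r, s, t, u with r > 0 and s − u ≠ r − t such that all sixteen entries below are nonnegative and P(0,0|0,0)=r, P(0,1|0,0)=0, P(1,0|0,0)=0, P(1,1|0,0)=1−r; P(0,0|0,1)=r−s, P(0,1|0,1)=s, P(1,0|0,1)=−r+t+s, P(1,1|0,1)=1−t−s; P(0,0|1,0)=t−u, P(0,1|1,0)=u, P(1,0|1,0)=r−t+u, P(1,1|1,0)=1−r−u; P(0,0|1,1)=t, P(0,1|1,1)=0, P(1,0|1,1)=0, P(1,1|1,1)=1−t. -/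
import Mathlib


open Finset
open scoped ComplexOrder

attribute [local instance] Classical.propDecidable

noncomputable section

/-- A bipartite box `P a b x y = P(a,b|x,y)`: nonnegative entries summing to one over
the outputs, for every pair of inputs. -/
def IsBox {nA nB nX nY : ℕ} (P : Fin nA → Fin nB → Fin nX → Fin nY → ℝ) : Prop :=
  (∀ a b x y, 0 ≤ P a b x y) ∧ ∀ x y, ∑ a, ∑ b, P a b x y = 1

/-- A bipartite box is nonsignalling if Alice's output marginal does not depend on
Bob's input and vice versa. -/
def NonSignallingBox {nA nB nX nY : ℕ}
    (P : Fin nA → Fin nB → Fin nX → Fin nY → ℝ) : Prop :=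
  (∀ a x y y', ∑ b, P a b x y = ∑ b, P a b x y') ∧
  (∀ b y x x', ∑ a, P a b x y = ∑ a, P a b x' y)

/-- A quantum box: realised by local POVMs on a shared bipartite quantum state. -/
def IsQuantumBox {nA nB nX nY : ℕ}
    (P : Fin nA → Fin nB → Fin nX → Fin nY → ℝ) : Prop :=
  ∃ (dA dB : ℕ) (ρ : Matrix (Fin dA × Fin dB) (Fin dA × Fin dB) ℂ)
    (E : Fin nX → Fin nA → Matrix (Fin dA) (Fin dA) ℂ)
    (F : Fin nY → Fin nB → Matrix (Fin dB) (Fin dB) ℂ),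
    ρ.PosSemidef ∧ ρ.trace = 1 ∧
    (∀ x a, (E x a).PosSemidef) ∧ (∀ x, ∑ a, E x a = 1) ∧
    (∀ y b, (F y b).PosSemidef) ∧ (∀ y, ∑ b, F y b = 1) ∧
    ∀ a b x y, (P a b x y : ℂ) =
      ∑ q : Fin dA × Fin dB, ∑ q' : Fin dA × Fin dB,
        E x a q.1 q'.1 * F y b q.2 q'.2 * ρ q' q

/-- The pair of output sets `(αₙ, βₙ)` of the agreement argument for boxes:
`α₀` is the set of Alice's outputs (on input `x0`) for which she assigns conditional
probability `qA` to Bob outputting `b1` on input `y1` (similarly `β₀` for Bob), and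
`α_{n+1}` (resp. `β_{n+1}`) is the subset of `αₙ` (resp. `βₙ`) at which Alice (resp.
Bob) is moreover certain, on inputs `(x0, y0)`, that Bob's (resp. Alice's) output lies
in `βₙ` (resp. `αₙ`). -/
def ccdSets {nA nB nX nY : ℕ} (P : Fin nA → Fin nB → Fin nX → Fin nY → ℝ)
    (x0 x1 : Fin nX) (y0 y1 : Fin nY) (a1 : Fin nA) (b1 : Fin nB) (qA qB : ℝ) :
    ℕ → Finset (Fin nA) × Finset (Fin nB)
  | 0 => (univ.filter fun a => P a b1 x0 y1 / (∑ b, P a b x0 y1) = qA,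
          univ.filter fun b => P a1 b x1 y0 / (∑ a, P a b x1 y0) = qB)
  | n + 1 =>
      let s := ccdSets P x0 x1 y0 y1 a1 b1 qA qB n
      (s.1.filter fun a => (∑ b ∈ s.2, P a b x0 y0) / (∑ b, P a b x0 y0) = 1,
       s.2.filter fun b => (∑ a ∈ s.1, P a b x0 y0) / (∑ a, P a b x0 y0) = 1)

/-- A box exhibits **common certainty of disagreement** (at inputs/outputs `(0,0,0,0)`,
about the outputs of interest `(1,1)` on inputs `(1,1)`) if: the outputs on inputs
`(1,1)` are perfectly correlated, the event `(0,0,0,0)` has positive probability, and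
there are `q_A ≠ q_B` in `[0,1]` with `0 ∈ αₙ` and `0 ∈ βₙ` for every `n`. -/
def HasCCD {nA nB nX nY : ℕ} (hA : 2 ≤ nA) (hB : 2 ≤ nB) (hX : 2 ≤ nX) (hY : 2 ≤ nY)
    (P : Fin nA → Fin nB → Fin nX → Fin nY → ℝ) : Prop :=
  let a0 : Fin nA := ⟨0, by omega⟩
  let a1 : Fin nA := ⟨1, hA⟩
  let b0 : Fin nB := ⟨0, by omega⟩
  let b1 : Fin nB := ⟨1, hB⟩
  let x0 : Fin nX := ⟨0, by omega⟩
  let x1 : Fin nX := ⟨1, hX⟩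
  let y0 : Fin nY := ⟨0, by omega⟩
  let y1 : Fin nY := ⟨1, hY⟩
  (∀ (a : Fin nA) (b : Fin nB), (a : ℕ) ≠ (b : ℕ) → P a b x1 y1 = 0) ∧
  0 < P a0 b0 x0 y0 ∧
  ∃ qA qB : ℝ, qA ∈ Set.Icc (0 : ℝ) 1 ∧ qB ∈ Set.Icc (0 : ℝ) 1 ∧ qA ≠ qB ∧
    ∀ n : ℕ, a0 ∈ (ccdSets P x0 x1 y0 y1 a1 b1 qA qB n).1 ∧
             b0 ∈ (ccdSets P x0 x1 y0 y1 a1 b1 qA qB n).2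

/-- A box exhibits **singular disagreement** if: the outputs on inputs `(1,1)` are
perfectly correlated, the event `(0,0,0,0)` has positive probability, and the
well-defined conditional probabilities satisfy `P(b=1|a=0,x=0,y=1) = 1` and
`P(a=1|b=0,x=1,y=0) = 0`. -/
def HasSD {nA nB nX nY : ℕ} (hA : 2 ≤ nA) (hB : 2 ≤ nB) (hX : 2 ≤ nX) (hY : 2 ≤ nY)
    (P : Fin nA → Fin nB → Fin nX → Fin nY → ℝ) : Prop :=
  let a0 : Fin nA := ⟨0, by omega⟩
  let a1 : Fin nA := ⟨1, hA⟩
  let b0 : Fin nB := ⟨0, by omega⟩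
  let b1 : Fin nB := ⟨1, hB⟩
  let x0 : Fin nX := ⟨0, by omega⟩
  let x1 : Fin nX := ⟨1, hX⟩
  let y0 : Fin nY := ⟨0, by omega⟩
  let y1 : Fin nY := ⟨1, hY⟩
  (∀ (a : Fin nA) (b : Fin nB), (a : ℕ) ≠ (b : ℕ) → P a b x1 y1 = 0) ∧
  0 < P a0 b0 x0 y0 ∧
  (0 < ∑ b, P a0 b x0 y1 ∧ P a0 b1 x0 y1 / (∑ b, P a0 b x0 y1) = 1) ∧
  (0 < ∑ a, P a b0 x1 y0 ∧ P a1 b0 x1 y0 / (∑ a, P a b0 x1 y0) = 0)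

private lemma sum_mem_fin2 (S : Finset (Fin 2)) (f : Fin 2 → ℝ) :
    ∑ b ∈ S, f b = (if 0 ∈ S then f 0 else 0) + (if 1 ∈ S then f 1 else 0) := by
  have h : ∑ b ∈ S, f b = ∑ i ∈ univ, if i ∈ S then f i else 0 := by
    rw [Finset.sum_ite_mem, Finset.univ_inter]
  rw [h, Fin.sum_univ_two]

private lemma mem_ccd_zero_fst (P : Fin 2 → Fin 2 → Fin 2 → Fin 2 → ℝ) (qA qB : ℝ)
    (a : Fin 2) :
    a ∈ (ccdSets P 0 1 0 1 1 1 qA qB 0).1 ↔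
      P a 1 0 1 / (P a 0 0 1 + P a 1 0 1) = qA := by
  simp [ccdSets, Fin.sum_univ_two]

private lemma mem_ccd_zero_snd (P : Fin 2 → Fin 2 → Fin 2 → Fin 2 → ℝ) (qA qB : ℝ)
    (b : Fin 2) :
    b ∈ (ccdSets P 0 1 0 1 1 1 qA qB 0).2 ↔
      P 1 b 1 0 / (P 0 b 1 0 + P 1 b 1 0) = qB := by
  simp [ccdSets, Fin.sum_univ_two]

private lemma mem_ccd_succ_fst (P : Fin 2 → Fin 2 → Fin 2 → Fin 2 → ℝ) (qA qB : ℝ)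
    (n : ℕ) (a : Fin 2) :
    a ∈ (ccdSets P 0 1 0 1 1 1 qA qB (n + 1)).1 ↔
      a ∈ (ccdSets P 0 1 0 1 1 1 qA qB n).1 ∧
      (∑ b ∈ (ccdSets P 0 1 0 1 1 1 qA qB n).2, P a b 0 0) / (P a 0 0 0 + P a 1 0 0) = 1 := by
  simp [ccdSets, Fin.sum_univ_two]

private lemma mem_ccd_succ_snd (P : Fin 2 → Fin 2 → Fin 2 → Fin 2 → ℝ) (qA qB : ℝ)
    (n : ℕ) (b : Fin 2) :
    b ∈ (ccdSets P 0 1 0 1 1 1 qA qB (n + 1)).2 ↔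
      b ∈ (ccdSets P 0 1 0 1 1 1 qA qB n).2 ∧
      (∑ a ∈ (ccdSets P 0 1 0 1 1 1 qA qB n).1, P a b 0 0) / (P 0 b 0 0 + P 1 b 0 0) = 1 := by
  simp [ccdSets, Fin.sum_univ_two]

private lemma ccd_mono_fst (P : Fin 2 → Fin 2 → Fin 2 → Fin 2 → ℝ) (qA qB : ℝ)
    (m : ℕ) : ∀ k, (ccdSets P 0 1 0 1 1 1 qA qB (m + k)).1 ⊆ (ccdSets P 0 1 0 1 1 1 qA qB m).1
  | 0 => subset_rfl
  | k + 1 => fun a ha => ccd_mono_fst P qA qB m k ((mem_ccd_succ_fst P qA qB (m + k) a).mp ha).1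

private lemma ccd_mono_snd (P : Fin 2 → Fin 2 → Fin 2 → Fin 2 → ℝ) (qA qB : ℝ)
    (m : ℕ) : ∀ k, (ccdSets P 0 1 0 1 1 1 qA qB (m + k)).2 ⊆ (ccdSets P 0 1 0 1 1 1 qA qB m).2
  | 0 => subset_rfl
  | k + 1 => fun b hb => ccd_mono_snd P qA qB m k ((mem_ccd_succ_snd P qA qB (m + k) b).mp hb).1

/-- **Characterisation of 2-input 2-output nonsignalling boxes with common certainty of
disagreement.** Such a box exhibits common certainty of disagreement iff its entries
take the tabulated form, for parameters `r, s, t, u` with `r > 0` and `s − u ≠ r − t`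
making all sixteen entries nonnegative. -/
theorem ccd_characterisation (P : Fin 2 → Fin 2 → Fin 2 → Fin 2 → ℝ)
    (hbox : IsBox P) (hns : NonSignallingBox P) :
    HasCCD (le_refl 2) (le_refl 2) (le_refl 2) (le_refl 2) P ↔
    ∃ r s t u : ℝ, 0 < r ∧ s - u ≠ r - t ∧
      (0 ≤ r ∧ 0 ≤ 1 - r ∧
       0 ≤ r - s ∧ 0 ≤ s ∧ 0 ≤ -r + t + s ∧ 0 ≤ 1 - t - s ∧
       0 ≤ t - u ∧ 0 ≤ u ∧ 0 ≤ r - t + u ∧ 0 ≤ 1 - r - u ∧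
       0 ≤ t ∧ 0 ≤ 1 - t) ∧
      P 0 0 0 0 = r ∧ P 0 1 0 0 = 0 ∧ P 1 0 0 0 = 0 ∧ P 1 1 0 0 = 1 - r ∧
      P 0 0 0 1 = r - s ∧ P 0 1 0 1 = s ∧ P 1 0 0 1 = -r + t + s ∧ P 1 1 0 1 = 1 - t - s ∧
      P 0 0 1 0 = t - u ∧ P 0 1 1 0 = u ∧ P 1 0 1 0 = r - t + u ∧ P 1 1 1 0 = 1 - r - u ∧
      P 0 0 1 1 = t ∧ P 0 1 1 1 = 0 ∧ P 1 0 1 1 = 0 ∧ P 1 1 1 1 = 1 - t := by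
  obtain ⟨hps, hsum⟩ := hbox
  obtain ⟨hnsA, hnsB⟩ := hns
  have hs00 : P 0 0 0 0 + P 0 1 0 0 + (P 1 0 0 0 + P 1 1 0 0) = 1 := by
    simpa [Fin.sum_univ_two] using hsum 0 0
  have hs01 : P 0 0 0 1 + P 0 1 0 1 + (P 1 0 0 1 + P 1 1 0 1) = 1 := by
    simpa [Fin.sum_univ_two] using hsum 0 1
  have hs10 : P 0 0 1 0 + P 0 1 1 0 + (P 1 0 1 0 + P 1 1 1 0) = 1 := by
    simpa [Fin.sum_univ_two] using hsum 1 0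
  have hs11 : P 0 0 1 1 + P 0 1 1 1 + (P 1 0 1 1 + P 1 1 1 1) = 1 := by
    simpa [Fin.sum_univ_two] using hsum 1 1
  have hA00 : P 0 0 0 0 + P 0 1 0 0 = P 0 0 0 1 + P 0 1 0 1 := by
    simpa [Fin.sum_univ_two] using hnsA 0 0 0 1
  have hA10 : P 1 0 0 0 + P 1 1 0 0 = P 1 0 0 1 + P 1 1 0 1 := by
    simpa [Fin.sum_univ_two] using hnsA 1 0 0 1
  have hA01 : P 0 0 1 0 + P 0 1 1 0 = P 0 0 1 1 + P 0 1 1 1 := by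
    simpa [Fin.sum_univ_two] using hnsA 0 1 0 1
  have hA11 : P 1 0 1 0 + P 1 1 1 0 = P 1 0 1 1 + P 1 1 1 1 := by
    simpa [Fin.sum_univ_two] using hnsA 1 1 0 1
  have hB00 : P 0 0 0 0 + P 1 0 0 0 = P 0 0 1 0 + P 1 0 1 0 := by
    simpa [Fin.sum_univ_two] using hnsB 0 0 0 1
  have hB10 : P 0 1 0 0 + P 1 1 0 0 = P 0 1 1 0 + P 1 1 1 0 := by
    simpa [Fin.sum_univ_two] using hnsB 1 0 0 1
  have hB01 : P 0 0 0 1 + P 1 0 0 1 = P 0 0 1 1 + P 1 0 1 1 := by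
    simpa [Fin.sum_univ_two] using hnsB 0 1 0 1
  have hB11 : P 0 1 0 1 + P 1 1 0 1 = P 0 1 1 1 + P 1 1 1 1 := by
    simpa [Fin.sum_univ_two] using hnsB 1 1 0 1
  have n0000 := hps 0 0 (0:Fin 2) 0; have n0100 := hps 0 1 (0:Fin 2) 0
  have n1000 := hps 1 0 (0:Fin 2) 0; have n1100 := hps 1 1 (0:Fin 2) 0
  have n0001 := hps 0 0 (0:Fin 2) 1; have n0101 := hps 0 1 (0:Fin 2) 1
  have n1001 := hps 1 0 (0:Fin 2) 1; have n1101 := hps 1 1 (0:Fin 2) 1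
  have n0010 := hps 0 0 (1:Fin 2) 0; have n0110 := hps 0 1 (1:Fin 2) 0
  have n1010 := hps 1 0 (1:Fin 2) 0; have n1110 := hps 1 1 (1:Fin 2) 0
  have n0011 := hps 0 0 (1:Fin 2) 1; have n0111 := hps 0 1 (1:Fin 2) 1
  have n1011 := hps 1 0 (1:Fin 2) 1; have n1111 := hps 1 1 (1:Fin 2) 1
  constructor
  · intro h
    simp only [HasCCD, Fin.mk_zero, Fin.mk_one] at h
    obtain ⟨hcorr, hr, qA, qB, hqA, hqB, hqne, hmem⟩ := h
    have h0111 : P 0 1 1 1 = 0 := hcorr 0 1 (by decide)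
    have h1011 : P 1 0 1 1 = 0 := hcorr 1 0 (by decide)
    have hA0 : P 0 1 0 1 / (P 0 0 0 1 + P 0 1 0 1) = qA :=
      (mem_ccd_zero_fst P qA qB 0).mp (hmem 0).1
    have hB0 : P 1 0 1 0 / (P 0 0 1 0 + P 1 0 1 0) = qB :=
      (mem_ccd_zero_snd P qA qB 0).mp (hmem 0).2
    by_cases hAall : ∀ n, (1 : Fin 2) ∈ (ccdSets P 0 1 0 1 1 1 qA qB n).1
    · by_cases hBall : ∀ n, (1 : Fin 2) ∈ (ccdSets P 0 1 0 1 1 1 qA qB n).2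
      · -- both chains stay full: leads to qA = qB, contradiction
        exfalso
        have hA1 : P 1 1 0 1 / (P 1 0 0 1 + P 1 1 0 1) = qA :=
          (mem_ccd_zero_fst P qA qB 1).mp (hAall 0)
        have hB1 : P 1 1 1 0 / (P 0 1 1 0 + P 1 1 1 0) = qB :=
          (mem_ccd_zero_snd P qA qB 1).mp (hBall 0)
        have hc1 := ((mem_ccd_succ_fst P qA qB 0 1).mp (hAall 1)).2
        rw [sum_mem_fin2, if_pos (hmem 0).2, if_pos (hBall 0)] at hc1
        have hm1 : P 1 0 0 0 + P 1 1 0 0 ≠ 0 := by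
          intro hz; rw [hz, div_zero] at hc1; norm_num at hc1
        have hd1s := ((mem_ccd_succ_snd P qA qB 0 1).mp (hBall 1)).2
        rw [sum_mem_fin2, if_pos (hmem 0).1, if_pos (hAall 0)] at hd1s
        have hm1' : P 0 1 0 0 + P 1 1 0 0 ≠ 0 := by
          intro hz; rw [hz, div_zero] at hd1s; norm_num at hd1s
        have hd0 : P 0 0 0 1 + P 0 1 0 1 ≠ 0 := by
          intro hz; rw [← hA00] at hz; linarith
        have hd1 : P 1 0 0 1 + P 1 1 0 1 ≠ 0 := by
          intro hz; rw [← hA10] at hz; exact hm1 hz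
        have e1 : P 0 1 0 1 = qA * (P 0 0 0 1 + P 0 1 0 1) := by
          rw [← hA0, div_mul_cancel₀ _ hd0]
        have e2 : P 1 1 0 1 = qA * (P 1 0 0 1 + P 1 1 0 1) := by
          rw [← hA1, div_mul_cancel₀ _ hd1]
        have hqA1 : qA = P 0 1 0 1 + P 1 1 0 1 := by
          linear_combination -e1 - e2 - qA * hs01
        have hd0' : P 0 0 1 0 + P 1 0 1 0 ≠ 0 := by
          intro hz; rw [← hB00] at hz; linarith
        have hd1' : P 0 1 1 0 + P 1 1 1 0 ≠ 0 := by
          intro hz; rw [← hB10] at hz; exact hm1' hz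
        have e3 : P 1 0 1 0 = qB * (P 0 0 1 0 + P 1 0 1 0) := by
          rw [← hB0, div_mul_cancel₀ _ hd0']
        have e4 : P 1 1 1 0 = qB * (P 0 1 1 0 + P 1 1 1 0) := by
          rw [← hB1, div_mul_cancel₀ _ hd1']
        have hqB1 : qB = P 1 0 1 0 + P 1 1 1 0 := by
          linear_combination -e3 - e4 - qB * hs10
        exact hqne (by linarith)
      · -- Alice's chain full, Bob's chain shrinks: contradiction
        exfalso
        push_neg at hBall
        obtain ⟨n, hn⟩ := hBall
        have hc0 := ((mem_ccd_succ_fst P qA qB n 0).mp (hmem (n + 1)).1).2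
        rw [sum_mem_fin2, if_pos (hmem n).2, if_neg hn, add_zero] at hc0
        have hden0 : P 0 0 0 0 + P 0 1 0 0 ≠ 0 := by intro hz; linarith
        have h0100 : P 0 1 0 0 = 0 := by
          rw [div_eq_one_iff_eq hden0] at hc0; linarith
        have hc1 := ((mem_ccd_succ_fst P qA qB n 1).mp (hAall (n + 1))).2
        rw [sum_mem_fin2, if_pos (hmem n).2, if_neg hn, add_zero] at hc1
        have hden1 : P 1 0 0 0 + P 1 1 0 0 ≠ 0 := by
          intro hz; rw [hz, div_zero] at hc1; norm_num at hc1
        have h1100 : P 1 1 0 0 = 0 := by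
          rw [div_eq_one_iff_eq hden1] at hc1; linarith
        have hA1 : P 1 1 0 1 / (P 1 0 0 1 + P 1 1 0 1) = qA :=
          (mem_ccd_zero_fst P qA qB 1).mp (hAall 0)
        have hd0 : P 0 0 0 1 + P 0 1 0 1 ≠ 0 := by
          intro hz; rw [← hA00] at hz; linarith
        have hd1 : P 1 0 0 1 + P 1 1 0 1 ≠ 0 := by
          intro hz; rw [← hA10] at hz; exact hden1 hz
        have e1 : P 0 1 0 1 = qA * (P 0 0 0 1 + P 0 1 0 1) := by
          rw [← hA0, div_mul_cancel₀ _ hd0]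
        have e2 : P 1 1 0 1 = qA * (P 1 0 0 1 + P 1 1 0 1) := by
          rw [← hA1, div_mul_cancel₀ _ hd1]
        have hqA1 : qA = P 0 1 0 1 + P 1 1 0 1 := by
          linear_combination -e1 - e2 - qA * hs01
        have hd0' : P 0 0 1 0 + P 1 0 1 0 ≠ 0 := by
          intro hz; rw [← hB00] at hz; linarith
        have e3 : P 1 0 1 0 = qB * (P 0 0 1 0 + P 1 0 1 0) := by
          rw [← hB0, div_mul_cancel₀ _ hd0']
        have hz1 : P 1 1 1 0 = 0 := by linarith
        have hone : P 0 0 1 0 + P 1 0 1 0 = 1 := by linarith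
        have e3' : P 1 0 1 0 = qB := by rw [hone, mul_one] at e3; exact e3
        exact hqne (by linarith)
    · by_cases hBall : ∀ n, (1 : Fin 2) ∈ (ccdSets P 0 1 0 1 1 1 qA qB n).2
      · -- Bob's chain full, Alice's chain shrinks: contradiction
        exfalso
        push_neg at hAall
        obtain ⟨n, hn⟩ := hAall
        have hc0 := ((mem_ccd_succ_snd P qA qB n 0).mp (hmem (n + 1)).2).2
        rw [sum_mem_fin2, if_pos (hmem n).1, if_neg hn, add_zero] at hc0
        have hden0 : P 0 0 0 0 + P 1 0 0 0 ≠ 0 := by intro hz; linarith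
        have h1000 : P 1 0 0 0 = 0 := by
          rw [div_eq_one_iff_eq hden0] at hc0; linarith
        have hc1 := ((mem_ccd_succ_snd P qA qB n 1).mp (hBall (n + 1))).2
        rw [sum_mem_fin2, if_pos (hmem n).1, if_neg hn, add_zero] at hc1
        have hden1 : P 0 1 0 0 + P 1 1 0 0 ≠ 0 := by
          intro hz; rw [hz, div_zero] at hc1; norm_num at hc1
        have h1100 : P 1 1 0 0 = 0 := by
          rw [div_eq_one_iff_eq hden1] at hc1; linarith
        have hB1 : P 1 1 1 0 / (P 0 1 1 0 + P 1 1 1 0) = qB :=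
          (mem_ccd_zero_snd P qA qB 1).mp (hBall 0)
        have hd0' : P 0 0 1 0 + P 1 0 1 0 ≠ 0 := by
          intro hz; rw [← hB00] at hz; linarith
        have hd1' : P 0 1 1 0 + P 1 1 1 0 ≠ 0 := by
          intro hz; rw [← hB10] at hz; exact hden1 hz
        have e3 : P 1 0 1 0 = qB * (P 0 0 1 0 + P 1 0 1 0) := by
          rw [← hB0, div_mul_cancel₀ _ hd0']
        have e4 : P 1 1 1 0 = qB * (P 0 1 1 0 + P 1 1 1 0) := by
          rw [← hB1, div_mul_cancel₀ _ hd1']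
        have hqB1 : qB = P 1 0 1 0 + P 1 1 1 0 := by
          linear_combination -e3 - e4 - qB * hs10
        have hd0 : P 0 0 0 1 + P 0 1 0 1 ≠ 0 := by
          intro hz; rw [← hA00] at hz; linarith
        have e1 : P 0 1 0 1 = qA * (P 0 0 0 1 + P 0 1 0 1) := by
          rw [← hA0, div_mul_cancel₀ _ hd0]
        have h1101 : P 1 1 0 1 = 0 := by linarith
        have hone : P 0 0 0 1 + P 0 1 0 1 = 1 := by linarith
        have e1' : P 0 1 0 1 = qA := by rw [hone, mul_one] at e1; exact e1
        exact hqne (by linarith)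
      · -- both chains shrink to {0}: the box is perfectly correlated at (0,0)
        push_neg at hAall
        push_neg at hBall
        obtain ⟨n1, hn1⟩ := hAall
        obtain ⟨n2, hn2⟩ := hBall
        have hnA : (1 : Fin 2) ∉ (ccdSets P 0 1 0 1 1 1 qA qB (n1 + n2)).1 :=
          fun hx => hn1 (ccd_mono_fst P qA qB n1 n2 hx)
        have hnB : (1 : Fin 2) ∉ (ccdSets P 0 1 0 1 1 1 qA qB (n1 + n2)).2 := by
          intro hx
          exact hn2 (ccd_mono_snd P qA qB n2 n1 (by rwa [Nat.add_comm n2 n1]))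
        have hc0 := ((mem_ccd_succ_fst P qA qB (n1 + n2) 0).mp (hmem (n1 + n2 + 1)).1).2
        rw [sum_mem_fin2, if_pos (hmem (n1 + n2)).2, if_neg hnB, add_zero] at hc0
        have hden0 : P 0 0 0 0 + P 0 1 0 0 ≠ 0 := by intro hz; linarith
        have h0100 : P 0 1 0 0 = 0 := by
          rw [div_eq_one_iff_eq hden0] at hc0; linarith
        have hd0s := ((mem_ccd_succ_snd P qA qB (n1 + n2) 0).mp (hmem (n1 + n2 + 1)).2).2
        rw [sum_mem_fin2, if_pos (hmem (n1 + n2)).1, if_neg hnA, add_zero] at hd0s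
        have hden0' : P 0 0 0 0 + P 1 0 0 0 ≠ 0 := by intro hz; linarith
        have h1000 : P 1 0 0 0 = 0 := by
          rw [div_eq_one_iff_eq hden0'] at hd0s; linarith
        refine ⟨P 0 0 0 0, P 0 1 0 1, P 0 0 1 1, P 0 1 1 0, hr, ?_, ?_, rfl, h0100,
          h1000, by linarith, by linarith, rfl, by linarith, by linarith, by linarith,
          rfl, by linarith, by linarith, rfl, h0111, h1011, by linarith⟩
        · intro heq
          apply hqne
          rw [← hA0, ← hB0]
          have k2 : P 0 0 1 0 + P 1 0 1 0 = P 0 0 0 1 + P 0 1 0 1 := by linarith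
          have k1 : P 1 0 1 0 = P 0 1 0 1 := by linarith
          rw [k2, k1]
        · refine ⟨by linarith, by linarith, by linarith, by linarith, by linarith,
            by linarith, by linarith, by linarith, by linarith, by linarith,
            by linarith, by linarith⟩
  · rintro ⟨r, s, t, u, hr, hnequ, ⟨g1, g2, g3, g4, g5, g6, g7, g8, g9, g10, g11, g12⟩,
      e01, e02, e03, e04, e05, e06, e07, e08, e09, e10, e11, e12, e13, e14, e15, e16⟩
    simp only [HasCCD, Fin.mk_zero, Fin.mk_one]
    refine ⟨?_, ?_, s / r, (r - t + u) / r, ?_, ?_, ?_, ?_⟩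
    · intro a b hab
      fin_cases a <;> fin_cases b
      · exact absurd rfl hab
      · exact e14
      · exact e15
      · exact absurd rfl hab
    · rw [e01]; exact hr
    · exact ⟨div_nonneg g4 hr.le, (div_le_one hr).mpr (by linarith)⟩
    · exact ⟨div_nonneg g9 hr.le, (div_le_one hr).mpr (by linarith)⟩
    · intro hq
      apply hnequ
      rw [div_eq_div_iff hr.ne' hr.ne'] at hq
      have hsu : s = r - t + u := mul_right_cancel₀ hr.ne' hq
      linarith
    · intro n
      induction n with
      | zero =>
        constructor
        · rw [mem_ccd_zero_fst, e05, e06, show r - s + s = r from by ring]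
        · rw [mem_ccd_zero_snd, e09, e11, show t - u + (r - t + u) = r from by ring]
      | succ n ih =>
        constructor
        · rw [mem_ccd_succ_fst]
          refine ⟨ih.1, ?_⟩
          rw [sum_mem_fin2, if_pos ih.2, e01, e02]
          simp [hr.ne']
        · rw [mem_ccd_succ_snd]
          refine ⟨ih.2, ?_⟩
          rw [sum_mem_fin2, if_pos ih.1, e01, e03]
          simp [hr.ne']
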